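/- arXiv:1401.1403 — 2 statements merged into one kernel-verified Lean document; each statement's English description precedes it below -/
import Mathlib

section
/- Let $r : [0,1] \to [0,1]$ be continuously differentiable in a neighborhood of $d_0 \in (0,1)$ with $r(d_0) = 1/2$ and $r'(d_0) > 0$, and let $\xi_n$ be random variables with $s_n (\hat a_n - d_0) = \xi_n$ for a sequence $s_n \to \infty$, where $\xi_n \to \xi$ almost surely for some finite random variable $\xi$. Then $s_n^2 \big( \mathcal{R}(f_{\hat a_n}) - \mathcal{R}(f^*) \big) = s_n \int_{d_0}^{\hat a_n} 2(r(x)-1/2)\,dx \to r'(d_0)\, \xi^2$ almost surely. -/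
/-!
Writing `F t = ∫ x in d0..d0 + t, 2 * (r x - 1 / 2)`, we have `F 0 = F' 0 = 0` and `F'' 0 = 2 r'(d0)`,
so L'Hôpital's rule gives `F t / t ^ 2 → r'(d0)` as `t → 0`. Along each path `t n = ξ n / s n → 0`,
and `s n ^ 2 * F (t n) = ξ n ^ 2 * (F (t n) / t n ^ 2) → ξ ^ 2 * r'(d0)`.
-/

open MeasureTheory Filter Topology

theorem hasDerivAt_integral_add_right {g : ℝ → ℝ} {a ε t : ℝ}
    (hcont : ContinuousOn g (Metric.ball a ε)) (ht : t ∈ Metric.ball (0 : ℝ) ε) :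
    HasDerivAt (fun u => ∫ x in a..a + u, g x) (g (a + t)) t := by
  have ha : a ∈ Metric.ball a ε := Metric.mem_ball_self (Metric.pos_of_mem_ball ht)
  have hat : a + t ∈ Metric.ball a ε := by simpa [Real.dist_eq] using ht
  have hsub : Set.uIcc a (a + t) ⊆ Metric.ball a ε :=
    (convex_ball a ε).ordConnected.uIcc_subset ha hat
  have hcontAt : ContinuousAt g (a + t) := hcont.continuousAt (Metric.isOpen_ball.mem_nhds hat)
  have hright : HasDerivAt (fun u => ∫ x in a..u, g x) (g (a + t)) (a + t) :=
    intervalIntegral.integral_hasDerivAt_right ((hcont.mono hsub).intervalIntegrable)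
      (hcont.stronglyMeasurableAtFilter Metric.isOpen_ball _ hat) hcontAt
  simpa using hright.comp_const_add a t

theorem tendsto_integral_div_sq_of_hasDerivAt {g : ℝ → ℝ} {a c ε : ℝ} (hε : 0 < ε)
    (hcont : ContinuousOn g (Metric.ball a ε)) (hderiv : HasDerivAt g c a) (hzero : g a = 0) :
    Tendsto (fun t => (∫ x in a..a + t, g x) / t ^ 2) (𝓝[≠] 0) (𝓝 (c / 2)) := by
  have hF : ∀ t ∈ Metric.ball (0 : ℝ) ε,
      HasDerivAt (fun u => ∫ x in a..a + u, g x) (g (a + t)) t :=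
    fun t ht => hasDerivAt_integral_add_right hcont ht
  have hslope : Tendsto (fun t => g (a + t) / (2 * t)) (𝓝[≠] 0) (𝓝 (c / 2)) := by
    refine (hderiv.tendsto_slope_zero.div_const 2).congr fun t => ?_
    rw [hzero, sub_zero, smul_eq_mul]
    ring
  refine HasDerivAt.lhopital_zero_nhdsNE (f' := fun t => g (a + t)) (g' := fun t => 2 * t)
    ?_ ?_ ?_ ?_ ?_ hslope
  · exact eventually_nhdsWithin_of_eventually_nhds
      (eventually_of_mem (Metric.ball_mem_nhds 0 hε) hF)
  · exact Eventually.of_forall fun t => by simpa [mul_comm] using hasDerivAt_pow 2 t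
  · filter_upwards [self_mem_nhdsWithin] with t ht
    exact mul_ne_zero two_ne_zero ht
  · refine tendsto_nhdsWithin_of_tendsto_nhds ?_
    simpa using (hF 0 (Metric.mem_ball_self hε)).continuousAt.tendsto
  · exact tendsto_nhdsWithin_of_tendsto_nhds (by simpa using (continuous_pow 2).tendsto (0 : ℝ))

theorem tendsto_sq_mul_comp_div {ι : Type*} {l : Filter ι} {φ : ℝ → ℝ} {K : ℝ}
    (hφ0 : φ 0 = 0) (hφ : Tendsto (fun t => φ t / t ^ 2) (𝓝[≠] 0) (𝓝 K))
    {s u : ι → ℝ} {ξ : ℝ} (hs : Tendsto s l atTop) (hu : Tendsto u l (𝓝 ξ)) :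
    Tendsto (fun i => s i ^ 2 * φ (u i / s i)) l (𝓝 (K * ξ ^ 2)) := by
  classical
  set ψ := Function.update (fun t => φ t / t ^ 2) 0 K
  have hψ : Tendsto ψ (𝓝 0) (𝓝 K) := by
    simpa [ψ] using (continuousAt_update_same.mpr hφ).tendsto
  have hφψ : ∀ t, φ t = t ^ 2 * ψ t := by
    intro t
    rcases eq_or_ne t 0 with rfl | ht
    · simp [hφ0]
    · simp only [ψ, Function.update_of_ne ht]
      field_simp
  refine ((hψ.comp (hu.div_atTop hs)).mul (hu.pow 2)).congr' ?_
  filter_upwards [hs.eventually_gt_atTop 0] with i hi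
  simp only [Function.comp_apply, hφψ]
  field_simp

theorem stmt_7_general {Ω : Type*} [MeasurableSpace Ω] (P : Measure Ω)
    (r : ℝ → ℝ) (d0 : ℝ) (hr0 : r d0 = 1 / 2)
    (δ0 : ℝ) (hδ0 : 0 < δ0)
    (hdiff : ∀ x ∈ Metric.ball d0 δ0, DifferentiableAt ℝ r x)
    (s : ℕ → ℝ) (hstend : Tendsto s atTop atTop)
    (ξ : ℕ → Ω → ℝ) (ξlim : Ω → ℝ)
    (hAS : ∀ᵐ ω ∂P, Tendsto (fun n => ξ n ω) atTop (nhds (ξlim ω))) :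
    ∀ᵐ ω ∂P,
      Tendsto (fun n => (s n) ^ 2 * ∫ x in d0..(d0 + ξ n ω / s n), 2 * (r x - 1 / 2))
        atTop (nhds (deriv r d0 * (ξlim ω) ^ 2)) := by
  have hcont : ContinuousOn (fun x => 2 * (r x - 1 / 2)) (Metric.ball d0 δ0) := fun x hx =>
    (((hdiff x hx).continuousAt.sub continuousAt_const).const_mul 2).continuousWithinAt
  have hderiv : HasDerivAt (fun x => 2 * (r x - 1 / 2)) (2 * deriv r d0) d0 :=
    ((hdiff d0 (Metric.mem_ball_self hδ0)).hasDerivAt.sub_const _).const_mul 2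
  have hquad := tendsto_integral_div_sq_of_hasDerivAt hδ0 hcont hderiv (by simp [hr0])
  rw [mul_div_cancel_left₀ _ two_ne_zero] at hquad
  filter_upwards [hAS] with ω hω
  exact tendsto_sq_mul_comp_div (by simp) hquad hstend hω

theorem stmt_7 {Ω : Type*} [MeasurableSpace Ω] (P : Measure Ω) [IsProbabilityMeasure P]
    (r : ℝ → ℝ) (d0 : ℝ) (hd0 : d0 ∈ Set.Ioo (0 : ℝ) 1) (hr0 : r d0 = 1 / 2)
    (δ0 : ℝ) (hδ0 : 0 < δ0)
    (hdiff : ∀ x ∈ Metric.ball d0 δ0, DifferentiableAt ℝ r x)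
    (hcont : ContinuousOn (deriv r) (Metric.ball d0 δ0))
    (hpos : 0 < deriv r d0)
    (s : ℕ → ℝ) (hs : ∀ n, 0 < s n) (hstend : Tendsto s atTop atTop)
    (ξ : ℕ → Ω → ℝ) (ξlim : Ω → ℝ)
    (hAS : ∀ᵐ ω ∂P, Tendsto (fun n => ξ n ω) atTop (nhds (ξlim ω))) :
    ∀ᵐ ω ∂P,
      Tendsto (fun n => (s n) ^ 2 * ∫ x in d0..(d0 + ξ n ω / s n), 2 * (r x - 1 / 2))
        atTop (nhds (deriv r d0 * (ξlim ω) ^ 2)) :=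
  stmt_7_general P r d0 hr0 δ0 hδ0 hdiff s hstend ξ ξlim hAS
end

section
/- Fix $a_1, a_2 > 0$ with $a_1 \ne a_2$, $d_0 \in \mathbb{R}$, and define $m(x) = \exp(-a_1 (d_0 - x))$ for $x \le d_0$ and $m(x) = \exp(-a_2 (x - d_0))$ for $x > d_0$. For $b > 0$ let $M(d) = \int_{d-b}^{d+b} m(x)\,dx$. Then, provided $|d^* - d_0| < b$ where $d^* = d_0 + (a_1 - a_2) b/(a_1 + a_2)$, the function $M$ attains its unique maximum at $d = d^*$, which differs from $d_0$ whenever $a_1 \ne a_2$. -/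
open MeasureTheory

/-! The derivative of the window integral is `M' d = m (d + b) - m (d - b)`. Since `log m` is a
tent, increasing with slope `a₁` and then decreasing with slope `a₂`, this difference is positive
for `d < d*` and negative for `d > d*`, so `M` rises strictly up to `d*` and falls strictly after. -/

-- `log m x = asymTent a1 a2 (x - d0)`
def asymTent (a1 a2 t : ℝ) : ℝ := min (a1 * t) (-(a2 * t))

lemma asymTent_eq_ite {a1 a2 : ℝ} (h1 : 0 ≤ a1) (h2 : 0 ≤ a2) (t : ℝ) :
    asymTent a1 a2 t = if t ≤ 0 then a1 * t else -(a2 * t) := by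
  unfold asymTent
  split_ifs with ht
  · exact min_eq_left (by nlinarith)
  · exact min_eq_right (by nlinarith)

lemma continuous_asymTent (a1 a2 : ℝ) : Continuous (asymTent a1 a2) := by
  unfold asymTent; fun_prop

section Window

variable {a1 a2 b s : ℝ}

/-- Both comparisons go through the left branch `a₁ (s - b)` of the tent at `s - b` and the right
branch `-a₂ (s + b)` at `s + b`; these two lines cross exactly at `s = (a₁ - a₂) b / (a₁ + a₂)`. -/
lemma asymTent_sub_lt_asymTent_add (h1 : 0 < a1) (h2 : 0 < a2) (hb : 0 < b)
    (hs : s < (a1 - a2) * b / (a1 + a2)) :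
    asymTent a1 a2 (s - b) < asymTent a1 a2 (s + b) := by
  have hcross : a1 * (s - b) < -(a2 * (s + b)) := by
    have := (lt_div_iff₀ (by linarith : 0 < a1 + a2)).mp hs
    linarith
  exact lt_min ((min_le_left _ _).trans_lt (by nlinarith)) ((min_le_left _ _).trans_lt hcross)

lemma asymTent_add_lt_asymTent_sub (h1 : 0 < a1) (h2 : 0 < a2) (hb : 0 < b)
    (hs : (a1 - a2) * b / (a1 + a2) < s) :
    asymTent a1 a2 (s + b) < asymTent a1 a2 (s - b) := by
  have hcross : -(a2 * (s + b)) < a1 * (s - b) := by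
    have := (div_lt_iff₀ (by linarith : 0 < a1 + a2)).mp hs
    linarith
  exact lt_min ((min_le_right _ _).trans_lt hcross) ((min_le_right _ _).trans_lt (by nlinarith))

end Window

lemma hasDerivAt_intervalIntegral_window {E : Type*} [NormedAddCommGroup E] [NormedSpace ℝ E]
    [CompleteSpace E] {f : ℝ → E} (hf : Continuous f) (b d : ℝ) :
    HasDerivAt (fun d => ∫ x in (d - b)..(d + b), f x) (f (d + b) - f (d - b)) d := by
  have hsplit : (fun d => ∫ x in (d - b)..(d + b), f x) =
      fun d => (∫ x in (0 : ℝ)..(d + b), f x) - ∫ x in (0 : ℝ)..(d - b), f x := by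
    funext d
    rw [intervalIntegral.integral_interval_sub_left (hf.intervalIntegrable _ _)
      (hf.intervalIntegrable _ _)]
  rw [hsplit]
  exact ((hf.integral_hasStrictDerivAt 0 (d + b)).hasDerivAt.comp_add_const d b).sub
    ((hf.integral_hasStrictDerivAt 0 (d - b)).hasDerivAt.comp_sub_const d b)

lemma lt_of_hasDerivAt_pos_of_lt_of_neg_of_gt {f f' : ℝ → ℝ} {c : ℝ}
    (hf : ∀ x, HasDerivAt f (f' x) x) (hpos : ∀ x < c, 0 < f' x) (hneg : ∀ x, c < x → f' x < 0)
    {d : ℝ} (hd : d ≠ c) : f d < f c := by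
  have hcont : Continuous f := continuous_iff_continuousAt.2 fun x => (hf x).continuousAt
  rcases hd.lt_or_gt with hdc | hcd
  · refine strictMonoOn_of_deriv_pos (convex_Iic c) hcont.continuousOn (fun x hx => ?_)
      (Set.mem_Iic.2 hdc.le) (Set.mem_Iic.2 le_rfl) hdc
    rw [interior_Iic] at hx
    exact (hf x).deriv ▸ hpos x hx
  · refine strictAntiOn_of_deriv_neg (convex_Ici c) hcont.continuousOn (fun x hx => ?_)
      (Set.mem_Ici.2 le_rfl) (Set.mem_Ici.2 hcd.le) hcd
    rw [interior_Ici] at hx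
    exact (hf x).deriv ▸ hneg x hx

theorem stmt_10_general (a1 a2 : ℝ) (h1 : 0 < a1) (h2 : 0 < a2) (hne : a1 ≠ a2)
    (d0 b : ℝ) (hb : 0 < b)
    (m : ℝ → ℝ)
    (hm : ∀ x : ℝ, m x = if x ≤ d0 then Real.exp (-a1 * (d0 - x)) else Real.exp (-a2 * (x - d0)))
    (M : ℝ → ℝ) (hM : ∀ d, M d = ∫ x in (d - b)..(d + b), m x)
    (dstar : ℝ) (hdstar : dstar = d0 + (a1 - a2) * b / (a1 + a2)) :
    (∀ d : ℝ, d ≠ dstar → M d < M dstar) ∧ dstar ≠ d0 := by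
  have hm_tent : m = fun x => Real.exp (asymTent a1 a2 (x - d0)) := by
    funext x
    rw [hm, asymTent_eq_ite h1.le h2.le]
    split_ifs <;> first | linarith | (congr 1; ring)
  have hm_cont : Continuous m :=
    hm_tent ▸ ((continuous_asymTent a1 a2).comp (continuous_sub_right d0)).rexp
  have hderiv : ∀ d, HasDerivAt M (m (d + b) - m (d - b)) d := fun d => by
    rw [funext hM]
    exact hasDerivAt_intervalIntegral_window hm_cont b d
  refine ⟨fun d hd => lt_of_hasDerivAt_pos_of_lt_of_neg_of_gt hderiv (fun d hd => ?_)
    (fun d hd => ?_) hd, ?_⟩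
  · have key := asymTent_sub_lt_asymTent_add h1 h2 hb (s := d - d0) (by linarith)
    rw [sub_right_comm, sub_add_eq_add_sub] at key
    simpa only [hm_tent, sub_pos, Real.exp_lt_exp] using key
  · have key := asymTent_add_lt_asymTent_sub h1 h2 hb (s := d - d0) (by linarith)
    rw [sub_right_comm, sub_add_eq_add_sub] at key
    simpa only [hm_tent, sub_neg, Real.exp_lt_exp] using key
  · rw [hdstar, ne_eq, add_eq_left]
    exact div_ne_zero (mul_ne_zero (sub_ne_zero.2 hne) hb.ne') (by linarith)

theorem stmt_10 (a1 a2 : ℝ) (h1 : 0 < a1) (h2 : 0 < a2) (hne : a1 ≠ a2)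
    (d0 b : ℝ) (hb : 0 < b)
    (m : ℝ → ℝ)
    (hm : ∀ x : ℝ, m x = if x ≤ d0 then Real.exp (-a1 * (d0 - x)) else Real.exp (-a2 * (x - d0)))
    (M : ℝ → ℝ) (hM : ∀ d, M d = ∫ x in (d - b)..(d + b), m x)
    (dstar : ℝ) (hdstar : dstar = d0 + (a1 - a2) * b / (a1 + a2))
    (hclose : |dstar - d0| < b) :
    (∀ d : ℝ, d ≠ dstar → M d < M dstar) ∧ dstar ≠ d0 :=
  stmt_10_general a1 a2 h1 h2 hne d0 b hb m hm M hM dstar hdstar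
end
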